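/- Let G be a finite group and H ≤ G a subgroup with N_G(H) = H. Then for automorphisms α, β of H, the subgroups Δ(H,α,H) and Δ(H,β,H) of G×G are (G×G)-conjugate if and only if α and β have the same image in Out(H), i.e., α∘β⁻¹ is an inner automorphism of H. (This yields the injectivity of the homomorphism Out(H) → Λ_G, α ↦ γ_α, in the Frobenius group setting.) -/

import Mathlib

open MulAction

/-- An isomorphism of `M`-sets: an equivariant bijection. -/
def IsoAsGSets (M X Y : Type*) [SMul M X] [SMul M Y] : Prop :=
  ∃ e : X ≃ Y, ∀ (m : M) (x : X), e (m • x) = m • e x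

/-- The twisted diagonal subgroup `Δ(R,α,S) = {(α s, s) | s ∈ S}` of `G × H`,
for an isomorphism `α : S ≃* R`. -/
def twistedDiagonal {G H : Type*} [Group G] [Group H] (R : Subgroup G) (S : Subgroup H)
    (α : S ≃* R) : Subgroup (G × H) :=
  ((R.subtype.comp α.toMonoidHom).prod S.subtype).range

/-- `Δ(G,φ,H) = {(φ h, h) | h ∈ H} ≤ G × H` for an isomorphism `φ : H ≃* G`. -/
def fullTwistedDiagonal {G H : Type*} [Group G] [Group H] (φ : H ≃* G) : Subgroup (G × H) :=
  (φ.toMonoidHom.prod (MonoidHom.id H)).range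

/-- The diagonal subgroup `Δ(R) = {(r,r) | r ∈ R} ≤ G × G`. -/
def diagSubgroup {G : Type*} [Group G] (R : Subgroup G) : Subgroup (G × G) :=
  (R.subtype.prod R.subtype).range

/-- A `(G,H)`-biset (i.e. a left `(G × H)`-set) is bifree if it is free as a left `G`-set
and free as a right `H`-set. -/
def IsBifree (G H X : Type*) [Group G] [Group H] [MulAction (G × H) X] : Prop :=
  (∀ (g : G) (x : X), (g, (1 : H)) • x = x → g = 1) ∧
  (∀ (h : H) (x : X), ((1 : G), h) • x = x → h = 1)

section Tensor

variable (G H K : Type*) [Group G] [Group H] [Group K]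
variable (X Y : Type*) [MulAction (G × H) X] [MulAction (H × K) Y]

/-- The relation on `X × Y` identifying `(x·h, y)` with `(x, h·y)`. -/
def bisetSetoid : Setoid (X × Y) where
  r p q := ∃ h : H, q.1 = ((1 : G), h) • p.1 ∧ q.2 = (h, (1 : K)) • p.2
  iseqv := by
    constructor
    · intro p
      exact ⟨1, by simp [Prod.mk_one_one], by simp [Prod.mk_one_one]⟩
    · rintro p q ⟨h, h1, h2⟩
      exact ⟨h⁻¹, by simp [h1, smul_smul, Prod.mk_one_one], by simp [h2, smul_smul, Prod.mk_one_one]⟩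
    · rintro p q r ⟨h, h1, h2⟩ ⟨h', h1', h2'⟩
      exact ⟨h' * h, by simp [h1, h1', smul_smul], by simp [h2, h2', smul_smul]⟩

/-- The tensor product `X ×_H Y` of a `(G,H)`-biset and an `(H,K)`-biset;
a `(G,K)`-biset. -/
def BisetTensor : Type _ :=
  Quotient (bisetSetoid G H K X Y)

variable {G H K X Y}

/-- The class of `(x, y)` in `X ×_H Y`. -/
def BisetTensor.mk (p : X × Y) : BisetTensor G H K X Y :=
  Quotient.mk (bisetSetoid G H K X Y) p

variable (G H K X Y)

instance : SMul (G × K) (BisetTensor G H K X Y) :=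
  ⟨fun a => Quotient.map (fun p => ((a.1, (1 : H)) • p.1, ((1 : H), a.2) • p.2))
    (by
      rintro p q ⟨h, h1, h2⟩
      exact ⟨h, by simp [h1, smul_smul], by simp [h2, smul_smul]⟩)⟩

variable {G H K X Y}

theorem BisetTensor.smul_mk (a : G × K) (p : X × Y) :
    a • (BisetTensor.mk p : BisetTensor G H K X Y) =
      BisetTensor.mk ((a.1, (1 : H)) • p.1, ((1 : H), a.2) • p.2) :=
  rfl

variable (G H K X Y)

instance : MulAction (G × K) (BisetTensor G H K X Y) where
  one_smul q := Quotient.inductionOn q fun p => by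
    refine Quotient.sound ⟨1, ?_, ?_⟩ <;> simp [Prod.mk_one_one]
  mul_smul a b q := Quotient.inductionOn q fun p => by
    refine Quotient.sound ⟨1, ?_, ?_⟩ <;> simp [smul_smul, Prod.mk_one_one]

end Tensor

section Op

/-- The opposite biset: a `(G,H)`-biset viewed as an `(H,G)`-biset via
`h · x · g := g⁻¹ · x · h⁻¹`. -/
def BisetOp (H G X : Type*) : Type _ := (fun _ _ => X) H G

instance BisetOp.instMulAction {G H : Type*} [Group G] [Group H] (X : Type*)
    [MulAction (G × H) X] : MulAction (H × G) (BisetOp H G X) :=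
  MulAction.compHom X (MulEquiv.prodComm : H × G ≃* G × H).toMonoidHom

instance BisetOp.instFinite {G H : Type*} (X : Type*) [Finite X] : Finite (BisetOp H G X) :=
  inferInstanceAs (Finite X)

end Op

section Grp

/-- The group `G` viewed as a `(G,G)`-biset via left and right multiplication. -/
structure BisetGrp (G : Type*) where
  /-- the underlying group element -/
  val : G

instance BisetGrp.instSMul {G : Type*} [Group G] : SMul (G × G) (BisetGrp G) :=
  ⟨fun p x => ⟨p.1 * x.val * p.2⁻¹⟩⟩

theorem BisetGrp.smul_def {G : Type*} [Group G] (p : G × G) (x : BisetGrp G) :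
    p • x = ⟨p.1 * x.val * p.2⁻¹⟩ := rfl

instance BisetGrp.instMulAction {G : Type*} [Group G] : MulAction (G × G) (BisetGrp G) where
  one_smul x := by
    cases x
    simp [BisetGrp.smul_def]
  mul_smul p q x := by
    cases x
    simp [BisetGrp.smul_def, mul_assoc]

instance BisetGrp.instFinite {G : Type*} [Finite G] : Finite (BisetGrp G) :=
  Finite.of_equiv G ⟨fun g => ⟨g⟩, fun x => x.val, fun _ => rfl, fun _ => rfl⟩

end Grp

/-- A pair `(X,Y)` of `(G,H)`-bisets is an orthogonal pair if
`(X ×_H X°) ⊔ (Y ×_H Y°) ≅ G ⊔ (X ×_H Y°) ⊔ (Y ×_H X°)` as `(G,G)`-bisets;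
this encodes the equation `([X] - [Y]) ·_H ([X] - [Y])° = [G]` in `B^Δ(G,G)`. -/
def IsOrthogonalPair (G H : Type*) [Group G] [Group H] (X Y : Type*)
    [MulAction (G × H) X] [MulAction (G × H) Y] : Prop :=
  IsoAsGSets (G × G)
    (BisetTensor G H G X (BisetOp H G X) ⊕ BisetTensor G H G Y (BisetOp H G Y))
    (BisetGrp G ⊕ (BisetTensor G H G X (BisetOp H G Y) ⊕ BisetTensor G H G Y (BisetOp H G X)))

section Iota

/-- For a `G`-set `Z`, the `(G,G)`-biset `ι(Z) = G × Z` with action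
`(g₁,g₂) • (g,z) = (g₁ g g₂⁻¹, g₂ • z)`. -/
structure IotaBiset (G Z : Type*) where
  /-- the group component -/
  fst : G
  /-- the `G`-set component -/
  snd : Z

instance IotaBiset.instSMul {G Z : Type*} [Group G] [MulAction G Z] :
    SMul (G × G) (IotaBiset G Z) :=
  ⟨fun p x => ⟨p.1 * x.fst * p.2⁻¹, p.2 • x.snd⟩⟩

theorem IotaBiset.smul_def {G Z : Type*} [Group G] [MulAction G Z] (p : G × G)
    (x : IotaBiset G Z) : p • x = ⟨p.1 * x.fst * p.2⁻¹, p.2 • x.snd⟩ := rfl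

instance IotaBiset.instMulAction {G Z : Type*} [Group G] [MulAction G Z] :
    MulAction (G × G) (IotaBiset G Z) where
  one_smul x := by
    cases x
    simp [IotaBiset.smul_def]
  mul_smul p q x := by
    cases x
    simp [IotaBiset.smul_def, mul_assoc, mul_smul]

instance IotaBiset.instFinite {G Z : Type*} [Finite G] [Finite Z] : Finite (IotaBiset G Z) :=
  Finite.of_equiv (G × Z) ⟨fun p => ⟨p.1, p.2⟩, fun x => (x.fst, x.snd), fun _ => rfl,
    fun _ => rfl⟩

end Iota

/-!
Projecting a conjugating pair `(g₁, g₂)` to either factor shows that it normalizes `H`, hence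
lies in `H`. Conjugation by a pair of elements of `H` twists `β` by inner automorphisms on both
sides, and a twisted diagonal determines its twist.
-/

open Subgroup

section TwistedDiagonal

variable {G K : Type*} [Group G] [Group K] {R : Subgroup G} {S : Subgroup K}

theorem mem_twistedDiagonal {α : S ≃* R} {x : G × K} :
    x ∈ twistedDiagonal R S α ↔ ∃ hx : x.2 ∈ S, (α ⟨x.2, hx⟩ : G) = x.1 := by
  constructor
  · rintro ⟨s, rfl⟩
    exact ⟨s.2, rfl⟩
  · rintro ⟨hx, h⟩
    exact ⟨⟨x.2, hx⟩, Prod.ext h rfl⟩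

theorem twistedDiagonal_injective : Function.Injective (twistedDiagonal R S) := by
  intro α β h
  ext s
  have hs : ((β s : G), (s : K)) ∈ twistedDiagonal R S α := h ▸ ⟨s, rfl⟩
  exact (mem_twistedDiagonal.1 hs).2

theorem map_fst_twistedDiagonal (α : S ≃* R) :
    (twistedDiagonal R S α).map (MonoidHom.fst G K) = R := by
  ext g
  constructor
  · rintro ⟨_, ⟨s, rfl⟩, rfl⟩
    exact (α s).2
  · intro hg
    exact ⟨_, ⟨α.symm ⟨g, hg⟩, rfl⟩, by simp⟩

theorem map_snd_twistedDiagonal (α : S ≃* R) :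
    (twistedDiagonal R S α).map (MonoidHom.snd G K) = S := by
  ext k
  constructor
  · rintro ⟨_, ⟨s, rfl⟩, rfl⟩
    exact s.2
  · intro hk
    exact ⟨_, ⟨⟨k, hk⟩, rfl⟩, rfl⟩

theorem map_conj_twistedDiagonal (α : S ≃* R) (r : R) (s : S) :
    (twistedDiagonal R S α).map (MulAut.conj ((r : G), (s : K))).toMonoidHom =
      twistedDiagonal R S ((MulAut.conj s).symm.trans (α.trans (MulAut.conj r))) := by
  ext x
  constructor
  · rintro ⟨_, ⟨t, rfl⟩, rfl⟩
    exact ⟨s * t * s⁻¹, by ext <;> simp [mul_assoc]⟩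
  · rintro ⟨t, rfl⟩
    exact ⟨_, ⟨s⁻¹ * t * s, rfl⟩, by ext <;> simp [mul_assoc]⟩

end TwistedDiagonal

section Conj

variable {G K : Type*} [Group G] [Group K]

theorem map_map_conj_fst (L : Subgroup (G × K)) (p : G × K) :
    (L.map (MulAut.conj p).toMonoidHom).map (MonoidHom.fst G K) =
      (L.map (MonoidHom.fst G K)).map (MulAut.conj p.1).toMonoidHom := by
  simp only [map_map]
  rfl

theorem map_map_conj_snd (L : Subgroup (G × K)) (p : G × K) :
    (L.map (MulAut.conj p).toMonoidHom).map (MonoidHom.snd G K) =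
      (L.map (MonoidHom.snd G K)).map (MulAut.conj p.2).toMonoidHom := by
  simp only [map_map]
  rfl

variable {R : Subgroup G} {S : Subgroup K} {α β : S ≃* R} {p : G × K}

theorem fst_mem_normalizer_of_map_conj_twistedDiagonal
    (h : (twistedDiagonal R S β).map (MulAut.conj p).toMonoidHom = twistedDiagonal R S α) :
    p.1 ∈ normalizer (R : Set G) := by
  have h₁ := congrArg (map (MonoidHom.fst G K)) h
  rw [map_map_conj_fst, map_fst_twistedDiagonal, map_fst_twistedDiagonal] at h₁
  exact mem_normalizer_iff_map_conj_eq.2 h₁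

theorem snd_mem_normalizer_of_map_conj_twistedDiagonal
    (h : (twistedDiagonal R S β).map (MulAut.conj p).toMonoidHom = twistedDiagonal R S α) :
    p.2 ∈ normalizer (S : Set K) := by
  have h₂ := congrArg (map (MonoidHom.snd G K)) h
  rw [map_map_conj_snd, map_snd_twistedDiagonal, map_snd_twistedDiagonal] at h₂
  exact mem_normalizer_iff_map_conj_eq.2 h₂

end Conj

theorem statement18_general {G : Type*} [Group G] (H : Subgroup G)
    (hself : Subgroup.normalizer (H : Set G) = H) (α β : ↥H ≃* ↥H) :
    (∃ p : G × G, Subgroup.map (MulAut.conj p).toMonoidHom (twistedDiagonal H H β) =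
        twistedDiagonal H H α) ↔
      ∃ h₀ : ↥H, ∀ x : ↥H, α (β.symm x) = h₀ * x * h₀⁻¹ := by
  constructor
  · rintro ⟨p, hp⟩
    obtain ⟨h₁, h₂⟩ : p.1 ∈ H ∧ p.2 ∈ H := hself ▸
      ⟨fst_mem_normalizer_of_map_conj_twistedDiagonal hp,
        snd_mem_normalizer_of_map_conj_twistedDiagonal hp⟩
    rw [show p = (((⟨p.1, h₁⟩ : H) : G), ((⟨p.2, h₂⟩ : H) : G)) from rfl,
      map_conj_twistedDiagonal] at hp
    refine ⟨⟨p.1, h₁⟩ * (β ⟨p.2, h₂⟩)⁻¹, fun x => ?_⟩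
    rw [← twistedDiagonal_injective hp]
    simp only [MulEquiv.trans_apply, MulAut.conj_symm_apply, map_mul, map_inv,
      MulEquiv.apply_symm_apply, MulAut.conj_apply, mul_inv_rev, inv_inv]
    group
  · rintro ⟨h₀, hh₀⟩
    refine ⟨((h₀ : G), ((1 : H) : G)), ?_⟩
    rw [map_conj_twistedDiagonal]
    congr 1
    ext x
    simp only [map_one, MulEquiv.trans_apply, MulAut.conj_apply, ← hh₀, MulEquiv.symm_apply_apply]
    rfl

/-- for `H ≤ G` with `N_G(H) = H`, the subgroups `Δ(H,α,H)` and `Δ(H,β,H)` of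
`G × G` are `(G×G)`-conjugate if and only if `α ∘ β⁻¹` is an inner automorphism of `H`. -/
theorem statement18 {G : Type*} [Group G] [Finite G] (H : Subgroup G)
    (hself : Subgroup.normalizer (H : Set G) = H) (α β : ↥H ≃* ↥H) :
    (∃ p : G × G, Subgroup.map (MulAut.conj p).toMonoidHom (twistedDiagonal H H β) =
        twistedDiagonal H H α) ↔
      ∃ h₀ : ↥H, ∀ x : ↥H, α (β.symm x) = h₀ * x * h₀⁻¹ :=
  statement18_general H hself α β
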